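/- (Theorem 5.1: timelike surfaces with equal Gaussian and extrinsic curvatures are Hopf) In the smooth normal field framework of the context with ε = 1 (timelike case) and with κ + 4τ² > 0, define at each point the extrinsic curvatures K_e^R = det(A_R|_{P_p}) and K_e^L = det(A_L|_{P_p}), the ambient sectional curvatures of the tangent plane K̄_R = τ² + (κ − 4τ²) g_R(N_R, ξ)² and K̄_L = τ² + (κ + 4τ²) g_L(N_L, ξ)², and the Gaussian curvatures (via the Gauss equations) K_R = K̄_R + K_e^R and K_L = K̄_L + K_e^L. If at a point p ∈ U one has K_R = K_L and K_e^R = K_e^L, then g_L(N_L(p), ξ) = 0 and ω_L(p) = 1; i.e. the tangent plane contains ξ, as for a Hopf surface. -/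

import Mathlib

noncomputable section

open Real

/-- Points/vectors of `ℝ³`. -/
abbrev V3 : Type := ℝ × ℝ × ℝ

/-- The domain `D`: all of `ℝ³` if `κ ≥ 0`, the solid cylinder
`{x² + y² < -4/κ}` if `κ < 0`. -/
def Dset (κ : ℝ) : Set V3 := {p | κ < 0 → p.1 ^ 2 + p.2.1 ^ 2 < -4 / κ}

/-- The conformal factor `λ`. -/
def lam (κ : ℝ) (p : V3) : ℝ := 1 / (1 + κ / 4 * (p.1 ^ 2 + p.2.1 ^ 2))

/-- The Riemannian BCV metric `g_R` at the point `p`, evaluated on vectors `u, v`. -/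
def gR (κ τ : ℝ) (p u v : V3) : ℝ :=
  (lam κ p) ^ 2 * (u.1 * v.1 + u.2.1 * v.2.1) +
    (u.2.2 + τ * lam κ p * (p.2.1 * u.1 - p.1 * u.2.1)) *
      (v.2.2 + τ * lam κ p * (p.2.1 * v.1 - p.1 * v.2.1))

/-- The Lorentzian BCV metric `g_L` at the point `p`, evaluated on vectors `u, v`. -/
def gL (κ τ : ℝ) (p u v : V3) : ℝ :=
  (lam κ p) ^ 2 * (u.1 * v.1 + u.2.1 * v.2.1) -
    (u.2.2 + τ * lam κ p * (p.2.1 * u.1 - p.1 * u.2.1)) *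
      (v.2.2 + τ * lam κ p * (p.2.1 * v.1 - p.1 * v.2.1))

/-- The frame field `E₁` (with `σ = κ/(2τ)`). -/
def E1 (κ τ : ℝ) (p : V3) : V3 :=
  ((lam κ p)⁻¹ * cos (κ / (2 * τ) * p.2.2),
   (lam κ p)⁻¹ * sin (κ / (2 * τ) * p.2.2),
   τ * (p.1 * sin (κ / (2 * τ) * p.2.2) - p.2.1 * cos (κ / (2 * τ) * p.2.2)))

/-- The frame field `E₂` (with `σ = κ/(2τ)`). -/
def E2 (κ τ : ℝ) (p : V3) : V3 :=
  (-((lam κ p)⁻¹ * sin (κ / (2 * τ) * p.2.2)),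
   (lam κ p)⁻¹ * cos (κ / (2 * τ) * p.2.2),
   τ * (p.1 * cos (κ / (2 * τ) * p.2.2) + p.2.1 * sin (κ / (2 * τ) * p.2.2)))

/-- The (constant) frame field `E₃ = ∂_z`. -/
def E3 : V3 := (0, 0, 1)

/-- The Killing field `ξ = E₃`. -/
def xi : V3 := E3

/-- First coefficient of a vector in the frame `{E₁,E₂,E₃}` (extracted with `g_R`;
the frame is `g_R`-orthonormal on `D`). -/
def c1 (κ τ : ℝ) (p : V3) (u : V3) : ℝ := gR κ τ p u (E1 κ τ p)

/-- Second frame coefficient. -/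
def c2 (κ τ : ℝ) (p : V3) (u : V3) : ℝ := gR κ τ p u (E2 κ τ p)

/-- Third frame coefficient. -/
def c3 (κ τ : ℝ) (p : V3) (u : V3) : ℝ := gR κ τ p u E3

/-- The Riemannian cross product `u ∧_R v` at `p`. -/
def wedgeR (κ τ : ℝ) (p : V3) (u v : V3) : V3 :=
  (c2 κ τ p u * c3 κ τ p v - c3 κ τ p u * c2 κ τ p v) • E1 κ τ p
    - (c1 κ τ p u * c3 κ τ p v - c3 κ τ p u * c1 κ τ p v) • E2 κ τ p
    + (c1 κ τ p u * c2 κ τ p v - c2 κ τ p u * c1 κ τ p v) • E3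

/-- The Lorentzian cross product `u ∧_L v` at `p`. -/
def wedgeL (κ τ : ℝ) (p : V3) (u v : V3) : V3 :=
  (c2 κ τ p u * c3 κ τ p v - c3 κ τ p u * c2 κ τ p v) • E1 κ τ p
    - (c1 κ τ p u * c3 κ τ p v - c3 κ τ p u * c1 κ τ p v) • E2 κ τ p
    - (c1 κ τ p u * c2 κ τ p v - c2 κ τ p u * c1 κ τ p v) • E3

/-- The Lie bracket of vector fields on (an open subset of) `ℝ³`:
`[X,Y](p) = DY(p)(X(p)) − DX(p)(Y(p))`. -/
def lie (X Y : V3 → V3) (p : V3) : V3 :=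
  fderiv ℝ Y p (X p) - fderiv ℝ X p (Y p)

/-- The explicit connection `∇ᴿ` of `𝔼³(κ,τ)`. -/
def nablaR (κ τ : ℝ) (X Y : V3 → V3) (p : V3) : V3 :=
  (fderiv ℝ (fun q => c1 κ τ q (Y q)) p (X p)) • E1 κ τ p
    + (fderiv ℝ (fun q => c2 κ τ q (Y q)) p (X p)) • E2 κ τ p
    + (fderiv ℝ (fun q => c3 κ τ q (Y q)) p (X p)) • E3
    + (τ * c2 κ τ p (X p) * c3 κ τ p (Y p)) • E1 κ τ p
    - (τ * c1 κ τ p (X p) * c3 κ τ p (Y p)) • E2 κ τ p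
    + (τ * (c1 κ τ p (X p) * c2 κ τ p (Y p) - c2 κ τ p (X p) * c1 κ τ p (Y p))) • E3
    + ((κ - 2 * τ ^ 2) / (2 * τ) * (c3 κ τ p (X p) * c1 κ τ p (Y p))) • E2 κ τ p
    - ((κ - 2 * τ ^ 2) / (2 * τ) * (c3 κ τ p (X p) * c2 κ τ p (Y p))) • E1 κ τ p

/-- The explicit connection `∇ᴸ` of `𝕃³(κ,τ)`. -/
def nablaL (κ τ : ℝ) (X Y : V3 → V3) (p : V3) : V3 :=
  (fderiv ℝ (fun q => c1 κ τ q (Y q)) p (X p)) • E1 κ τ p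
    + (fderiv ℝ (fun q => c2 κ τ q (Y q)) p (X p)) • E2 κ τ p
    + (fderiv ℝ (fun q => c3 κ τ q (Y q)) p (X p)) • E3
    - (τ * c2 κ τ p (X p) * c3 κ τ p (Y p)) • E1 κ τ p
    + (τ * c1 κ τ p (X p) * c3 κ τ p (Y p)) • E2 κ τ p
    + (τ * (c1 κ τ p (X p) * c2 κ τ p (Y p) - c2 κ τ p (X p) * c1 κ τ p (Y p))) • E3
    + ((κ + 2 * τ ^ 2) / (2 * τ) * (c3 κ τ p (X p) * c1 κ τ p (Y p))) • E2 κ τ p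
    - ((κ + 2 * τ ^ 2) / (2 * τ) * (c3 κ τ p (X p) * c2 κ τ p (Y p))) • E1 κ τ p

/-- `ω_L = √(ε + 2 g_L(N, ξ)²)`. -/
def omegaL (κ τ ε : ℝ) (p : V3) (N : V3) : ℝ :=
  Real.sqrt (ε + 2 * (gL κ τ p N xi) ^ 2)

/-- `ω_R = 1/ω_L`. -/
def omegaR (κ τ ε : ℝ) (p : V3) (N : V3) : ℝ := 1 / omegaL κ τ ε p N

/-- The Riemannian unit normal `N_R = (1/ω_L)(√(2(ω_L² − ε)) ξ − N_L)`. -/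
def NRof (κ τ ε : ℝ) (p : V3) (N : V3) : V3 :=
  (1 / omegaL κ τ ε p N) • (Real.sqrt (2 * ((omegaL κ τ ε p N) ^ 2 - ε)) • xi - N)

/-- `g_L(p)(n, ·)` as a linear form. -/
def gLlin (κ τ : ℝ) (p n : V3) : V3 →ₗ[ℝ] ℝ where
  toFun v := gL κ τ p n v
  map_add' v w := by
    simp only [gL, Prod.fst_add, Prod.snd_add]
    ring
  map_smul' r v := by
    simp only [gL, Prod.smul_fst, Prod.smul_snd, smul_eq_mul, RingHom.id_apply]
    ring

/-- The tangent plane at `p` determined by the normal `n`: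
`P_p = {v : g_L(n,v) = 0}`. -/
def Pp (κ τ : ℝ) (p n : V3) : Submodule ℝ V3 := LinearMap.ker (gLlin κ τ p n)

/-- The Lorentzian shape operator `A_L v = −∇ᴸ_v N_L`. -/
def AL (κ τ : ℝ) (NL : V3 → V3) (p : V3) (v : V3) : V3 :=
  -(nablaL κ τ (fun _ => v) NL p)

/-- The Riemannian shape operator `A_R v = −∇ᴿ_v N_R`. -/
def AR (κ τ ε : ℝ) (NL : V3 → V3) (p : V3) (v : V3) : V3 :=
  -(nablaR κ τ (fun _ => v) (fun q => NRof κ τ ε q (NL q)) p)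

/-- The tangential part `T_L = ξ − ε g_L(N_L, ξ) N_L`. -/
def TLof (κ τ ε : ℝ) (p : V3) (N : V3) : V3 := xi - (ε * gL κ τ p N xi) • N

/-- The tangential part `T_R = ξ − g_R(N_R, ξ) N_R`. -/
def TRof (κ τ ε : ℝ) (p : V3) (N : V3) : V3 :=
  xi - (gR κ τ p (NRof κ τ ε p N) xi) • NRof κ τ ε p N

/-- The rotation `J_L v = N_L ∧_L v`. -/
def JL (κ τ : ℝ) (p : V3) (N : V3) (v : V3) : V3 := wedgeL κ τ p N v

/-- The rotation `J_R v = N_R ∧_R v`. -/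
def JR (κ τ : ℝ) (p : V3) (N : V3) (v : V3) : V3 := wedgeR κ τ p N v

/-- Theorem 5.1, timelike case `ε = 1`, `κ + 4τ² > 0`: equal
Gaussian and extrinsic curvatures force `g_L(N_L, ξ) = 0` and `ω_L = 1`
(Hopf surface condition). -/
theorem thm_5_1 (κ τ : ℝ) (hτ : τ ≠ 0) (hκτ : κ + 4 * τ ^ 2 > 0)
    (U : Set V3) (hUopen : IsOpen U) (hUD : U ⊆ Dset κ)
    (NL : V3 → V3) (hNsmooth : ContDiffOn ℝ (⊤ : ℕ∞) NL U)
    (hunit : ∀ q ∈ U, gL κ τ q (NL q) (NL q) = 1)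
    (hle : ∀ q ∈ U, gL κ τ q (NL q) xi ≤ 0)
    (p : V3) (hp : p ∈ U)
    (BR BL : ↥(Pp κ τ p (NL p)) →ₗ[ℝ] ↥(Pp κ τ p (NL p)))
    (hBR : ∀ v : ↥(Pp κ τ p (NL p)), (BR v : V3) = AR κ τ 1 NL p (v : V3))
    (hBL : ∀ v : ↥(Pp κ τ p (NL p)), (BL v : V3) = AL κ τ NL p (v : V3))
    (hK : τ ^ 2 + (κ - 4 * τ ^ 2) * (gR κ τ p (NRof κ τ 1 p (NL p)) xi) ^ 2 +
        LinearMap.det BR =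
      τ ^ 2 + (κ + 4 * τ ^ 2) * (gL κ τ p (NL p) xi) ^ 2 + LinearMap.det BL)
    (hKe : LinearMap.det BR = LinearMap.det BL) :
    gL κ τ p (NL p) xi = 0 ∧ omegaL κ τ 1 p (NL p) = 1 := by
  set ν : ℝ := gL κ τ p (NL p) xi with hνdef
  have hν0 : ν ≤ 0 := hle p hp
  set ω : ℝ := omegaL κ τ 1 p (NL p) with hωdef
  have hω2 : ω ^ 2 = 1 + 2 * ν ^ 2 := by
    rw [hωdef, omegaL, ← hνdef, sq_sqrt (by positivity)]
  have hωpos : 0 < ω := by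
    rw [hωdef, omegaL]
    exact Real.sqrt_pos.2 (by nlinarith [sq_nonneg ν])
  have hsq : Real.sqrt (2 * (ω ^ 2 - 1)) = -2 * ν := by
    rw [hω2]
    have : 2 * (1 + 2 * ν ^ 2 - 1) = (-2 * ν) ^ 2 := by ring
    rw [this, Real.sqrt_sq (by linarith)]
  have hgRNR : gR κ τ p (NRof κ τ 1 p (NL p)) xi = -ν / ω := by
    have hν : ν = -((NL p).2.2 +
        τ * lam κ p * (p.2.1 * (NL p).1 - p.1 * (NL p).2.1)) := by
      rw [hνdef]; simp [gL, xi, E3]; try ring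
    rw [NRof, ← hωdef, hsq]
    simp only [gR, xi, E3, Prod.smul_fst, Prod.smul_snd, Prod.fst_sub, Prod.snd_sub,
      smul_eq_mul]
    rw [hν]
    field_simp
    ring
  rw [hgRNR, hKe] at hK
  have hK' : (κ - 4 * τ ^ 2) * (ν / ω) ^ 2 = (κ + 4 * τ ^ 2) * ν ^ 2 := by
    have : (-ν / ω) ^ 2 = (ν / ω) ^ 2 := by ring
    rw [this] at hK; linarith
  have hK'' : (κ - 4 * τ ^ 2) * ν ^ 2 = (κ + 4 * τ ^ 2) * ν ^ 2 * (1 + 2 * ν ^ 2) := by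
    have hωne : ω ≠ 0 := hωpos.ne'
    rw [div_pow] at hK'
    field_simp [hωne] at hK'
    rw [hω2] at hK'
    linarith [hK']
  have hτ2 : 0 < τ ^ 2 := by positivity
  have hν2 : ν ^ 2 = 0 := by nlinarith [sq_nonneg ν, sq_nonneg (ν ^ 2)]
  have hνz : ν = 0 := by
    have := sq_eq_zero_iff.mp hν2
    exact this
  refine ⟨hνz, ?_⟩
  rw [hωdef, omegaL, ← hνdef, hνz]
  norm_num

end
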